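/- arXiv:1610.01830 — 2 statements merged into one kernel-verified Lean document; each statement's English description precedes it below -/
import Mathlib

section
/- There are no naturals q₁ > q₂ > q₃ ≥ 3 (pairwise distinct) satisfying (1/2 - 1/q₁)·3 + (1/2 - 1/q₂)·1 + (1/2 - 1/q₃)·1 = 1. -/
theorem stmt_4 :
    ¬ ∃ q₁ q₂ q₃ : ℕ, 3 ≤ q₃ ∧ q₃ < q₂ ∧ q₂ < q₁ ∧
      ((1/2 : ℚ) - 1/(q₁ : ℚ)) * 3 + ((1/2 : ℚ) - 1/(q₂ : ℚ)) * 1 +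
        ((1/2 : ℚ) - 1/(q₃ : ℚ)) * 1 = 1 := by
  rintro ⟨q₁, q₂, q₃, h3, h32, h21, heq⟩
  have hq3 : (3:ℚ) ≤ q₃ := by exact_mod_cast h3
  have hq2 : (4:ℚ) ≤ q₂ := by exact_mod_cast (by omega : 4 ≤ q₂)
  have hq1 : (5:ℚ) ≤ q₁ := by exact_mod_cast (by omega : 5 ≤ q₁)
  have h1 : (1:ℚ)/q₁ ≤ 1/5 := by
    apply one_div_le_one_div_of_le <;> linarith
  have h2 : (1:ℚ)/q₂ ≤ 1/4 := by
    apply one_div_le_one_div_of_le <;> linarith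
  have h3' : (1:ℚ)/q₃ ≤ 1/3 := by
    apply one_div_le_one_div_of_le <;> linarith
  linarith
end

section
/- The solutions in distinct naturals q₁ ≠ q₂ ≥ 3 of (1/2 - 1/q₁)·2 + (1/2 - 1/q₂)·1 = 1 are exactly (q₁, q₂) ∈ {(12,3), (8,4), (5,10)}. -/
theorem stmt_9 (q₁ q₂ : ℕ) (h₁ : 3 ≤ q₁) (h₂ : 3 ≤ q₂) (hne : q₁ ≠ q₂) :
    ((1/2 : ℚ) - 1/(q₁ : ℚ)) * 2 + ((1/2 : ℚ) - 1/(q₂ : ℚ)) * 1 = 1 ↔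
      (q₁ = 12 ∧ q₂ = 3) ∨ (q₁ = 8 ∧ q₂ = 4) ∨ (q₁ = 5 ∧ q₂ = 10) := by
  constructor
  · intro h
    have hq₁ : (0:ℚ) < (q₁:ℚ) := by exact_mod_cast Nat.lt_of_lt_of_le (by norm_num) h₁
    have hq₂ : (0:ℚ) < (q₂:ℚ) := by exact_mod_cast Nat.lt_of_lt_of_le (by norm_num) h₂
    have key : ((4 * q₂ + 2 * q₁ : ℕ) : ℚ) = ((q₁ * q₂ : ℕ) : ℚ) := by
      push_cast
      field_simp at h
      ring_nf at h ⊢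
      linarith
    have keyN : 4 * q₂ + 2 * q₁ = q₁ * q₂ := by exact_mod_cast key
    have hb : q₁ ≤ 12 := by nlinarith [Nat.mul_le_mul_left q₁ h₂]
    interval_cases q₁ <;> omega
  · rintro (⟨rfl, rfl⟩ | ⟨rfl, rfl⟩ | ⟨rfl, rfl⟩) <;> norm_num
end
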